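/- For σ > 0 let φ_σ(x) = exp(−x²/(2σ²))/(σ√(2π)) denote the zero-mean Gaussian density with variance σ². Fix a ∈ ℝ, β ∈ (0,1), σ > 0 and k > 0. Let L₁ be the unique bounded measurable solution on (−k/σ, k/σ) of L₁(e) = e² + β ∫_{−k/σ}^{k/σ} φ₁(n − ae) L₁(n) dn, and let M₁ be the unique bounded measurable solution of M₁(e) = 1 + β ∫_{−k/σ}^{k/σ} φ₁(n − ae) M₁(n) dn. Then the functions L_σ(e) := σ² L₁(e/σ) and M_σ(e) := M₁(e/σ) are the unique bounded measurable solutions on (−k,k) of L_σ(e) = e² + β ∫_{−k}^{k} φ_σ(n − ae) L_σ(n) dn and M_σ(e) = 1 + β ∫_{−k}^{k} φ_σ(n − ae) M_σ(n) dn. -/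
import Mathlib


open MeasureTheory Set

/-- The zero-mean Gaussian density with standard deviation σ. -/
noncomputable def gaussDensity (σ : ℝ) (x : ℝ) : ℝ :=
  Real.exp (-x ^ 2 / (2 * σ ^ 2)) / (σ * Real.sqrt (2 * Real.pi))

lemma gauss_nonneg {σ : ℝ} (hσ : 0 < σ) (x : ℝ) : 0 ≤ gaussDensity σ x := by
  unfold gaussDensity
  have := Real.pi_pos
  positivity

lemma gauss_le {σ : ℝ} (hσ : 0 < σ) (x : ℝ) :
    gaussDensity σ x ≤ 1 / (σ * Real.sqrt (2 * Real.pi)) := by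
  unfold gaussDensity
  have h1 : Real.exp (-x ^ 2 / (2 * σ ^ 2)) ≤ 1 := by
    rw [Real.exp_le_one_iff]
    have : 0 < 2 * σ ^ 2 := by positivity
    apply div_nonpos_of_nonpos_of_nonneg
    · nlinarith [sq_nonneg x]
    · positivity
  have h2 : (0:ℝ) < σ * Real.sqrt (2 * Real.pi) := by
    have := Real.pi_pos; positivity
  exact div_le_div_of_nonneg_right h1 h2.le

lemma gauss_continuous (σ : ℝ) : Continuous (gaussDensity σ) := by
  unfold gaussDensity
  fun_prop

lemma gauss_eq (σ : ℝ) (x : ℝ) :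
    gaussDensity σ x = Real.exp (-(1/(2*σ^2)) * x ^ 2) / (σ * Real.sqrt (2 * Real.pi)) := by
  unfold gaussDensity; ring_nf

lemma gauss_integrable {σ : ℝ} (hσ : 0 < σ) : Integrable (gaussDensity σ) := by
  have h : Integrable (fun x => Real.exp (-(1/(2*σ^2)) * x ^ 2)) :=
    integrable_exp_neg_mul_sq (by positivity)
  have h2 := (h.div_const (σ * Real.sqrt (2 * Real.pi)))
  apply h2.congr
  filter_upwards with x
  rw [gauss_eq]

lemma gauss_integral {σ : ℝ} (hσ : 0 < σ) : ∫ x, gaussDensity σ x = 1 := by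
  have h2π : (0:ℝ) < 2 * Real.pi := by have := Real.pi_pos; linarith
  simp only [gauss_eq σ]
  rw [integral_div, integral_gaussian]
  rw [div_eq_one_iff_eq (by positivity)]
  rw [show Real.pi / (1 / (2 * σ ^ 2)) = (2 * Real.pi) * σ^2 by field_simp]
  rw [Real.sqrt_mul h2π.le, Real.sqrt_sq hσ.le]
  ring

lemma gauss_scale {σ : ℝ} (hσ : 0 < σ) (x : ℝ) :
    gaussDensity σ (σ * x) = gaussDensity 1 x / σ := by
  unfold gaussDensity
  rw [mul_pow, show -(σ ^ 2 * x ^ 2) / (2 * σ ^ 2) = -x ^ 2 / (2 * 1 ^ 2) by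
    field_simp]
  rw [div_div]
  ring_nf


/-- translated density integrates to ≤ 1 on Ioo. -/
lemma gauss_setIntegral_le {σ : ℝ} (hσ : 0 < σ) (c : ℝ) (s : Set ℝ) :
    ∫ n in s, gaussDensity σ (n - c) ≤ 1 := by
  have hint : Integrable (fun n => gaussDensity σ (n - c)) :=
    (gauss_integrable hσ).comp_sub_right c
  calc ∫ n in s, gaussDensity σ (n - c)
      ≤ ∫ n, gaussDensity σ (n - c) :=
        setIntegral_le_integral hint (ae_of_all _ fun x => gauss_nonneg hσ _)
    _ = 1 := by rw [integral_sub_right_eq_self (gaussDensity σ) c, gauss_integral hσ]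

/-- Change of variables for Ioo integrals. -/
lemma cov {σ k : ℝ} (hσ : 0 < σ) (hk : 0 < k) (f : ℝ → ℝ) :
    ∫ n in Ioo (-k) k, f (n / σ) = σ * ∫ m in Ioo (-(k/σ)) (k/σ), f m := by
  rw [← integral_Ioc_eq_integral_Ioo, ← integral_Ioc_eq_integral_Ioo,
      ← intervalIntegral.integral_of_le (by linarith),
      ← intervalIntegral.integral_of_le (by
        have : 0 < k / σ := by positivity
        linarith)]
  rw [intervalIntegral.integral_comp_div f hσ.ne', neg_div, smul_eq_mul]

lemma gauss_cov {a σ k : ℝ} (hσ : 0 < σ) (hk : 0 < k) (e : ℝ) (F : ℝ → ℝ) :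
    ∫ n in Ioo (-k) k, gaussDensity σ (n - a * e) * F (n / σ)
      = ∫ m in Ioo (-(k/σ)) (k/σ), gaussDensity 1 (m - a * (e / σ)) * F m := by
  have h1 : ∀ n : ℝ, gaussDensity σ (n - a * e) * F (n / σ)
      = (fun m => gaussDensity 1 (m - a * (e/σ)) / σ * F m) (n / σ) := by
    intro n
    have : n - a * e = σ * (n / σ - a * (e / σ)) := by field_simp
    rw [this, gauss_scale hσ]
  simp only [h1]
  have h2 := cov hσ hk (fun m => gaussDensity 1 (m - a * (e/σ)) / σ * F m)
  rw [h2, ← integral_const_mul]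
  congr 1; ext m; field_simp


/-- Existence: scaled solution solves the σ-equation. -/
lemma exists_aux {a β σ k : ℝ} (hσ : 0 < σ) (hk : 0 < k) (c : ℝ)
    (s : ℝ → ℝ) (hs : ∀ e, s e = c * s (e / σ))
    (F₁ : ℝ → ℝ)
    (hF₁ : ∀ e ∈ Ioo (-(k/σ)) (k/σ),
      F₁ e = s e + β * ∫ n in Ioo (-(k/σ)) (k/σ), gaussDensity 1 (n - a * e) * F₁ n) :
    ∀ e ∈ Ioo (-k) k,
      c * F₁ (e / σ) = s e + β * ∫ n in Ioo (-k) k,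
        gaussDensity σ (n - a * e) * (c * F₁ (n / σ)) := by
  intro e he
  have he' : e / σ ∈ Ioo (-(k/σ)) (k/σ) := by
    constructor
    · rw [← neg_div]; exact div_lt_div_of_pos_right he.1 hσ
    · exact div_lt_div_of_pos_right he.2 hσ
  have key := gauss_cov (a := a) hσ hk e (fun m => c * F₁ m)
  rw [key, hF₁ _ he']
  rw [show (∫ m in Ioo (-(k/σ)) (k/σ), gaussDensity 1 (m - a * (e/σ)) * (c * F₁ m))
      = c * ∫ m in Ioo (-(k/σ)) (k/σ), gaussDensity 1 (m - a * (e/σ)) * F₁ m from by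
    rw [← integral_const_mul]; congr 1; ext m; ring]
  rw [hs e]; ring

lemma integrableOn_bdd {k : ℝ} (f : ℝ → ℝ) (hf : Measurable f) (C : ℝ)
    (hC : ∀ x, |f x| ≤ C) : IntegrableOn f (Ioo (-k) k) := by
  refine ⟨hf.aestronglyMeasurable, ?_⟩
  exact HasFiniteIntegral.of_bounded (C := C)
    (ae_of_all _ fun x => by simpa [Real.norm_eq_abs] using hC x)

/-- Uniqueness via contraction. -/
lemma unique_aux {a β σ k : ℝ} (hβ : β ∈ Set.Ioo (0:ℝ) 1) (hσ : 0 < σ) (hk : 0 < k)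
    (s : ℝ → ℝ) (F G : ℝ → ℝ) (hF : Measurable F) (hG : Measurable G)
    (hFb : ∃ C, ∀ e, |F e| ≤ C) (hGb : ∃ C, ∀ e, |G e| ≤ C)
    (hFe : ∀ e ∈ Ioo (-k) k,
      F e = s e + β * ∫ n in Ioo (-k) k, gaussDensity σ (n - a * e) * F n)
    (hGe : ∀ e ∈ Ioo (-k) k,
      G e = s e + β * ∫ n in Ioo (-k) k, gaussDensity σ (n - a * e) * G n) :
    EqOn F G (Ioo (-k) k) := by
  obtain ⟨C₁, hC₁⟩ := hFb
  obtain ⟨C₂, hC₂⟩ := hGb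
  set B : ℝ := C₁ + C₂ with hB
  have hB0 : 0 ≤ B := by
    have := (abs_nonneg (F 0)).trans (hC₁ 0)
    have := (abs_nonneg (G 0)).trans (hC₂ 0)
    linarith
  -- measurability of the gaussian kernel
  have hker : ∀ e : ℝ, Measurable fun n => gaussDensity σ (n - a * e) := fun e =>
    (gauss_continuous σ).measurable.comp (measurable_id.sub measurable_const)
  have hkerbd : ∀ e n : ℝ, |gaussDensity σ (n - a * e)| ≤ 1 / (σ * Real.sqrt (2 * Real.pi)) :=
    fun e n => by rw [abs_of_nonneg (gauss_nonneg hσ _)]; exact gauss_le hσ _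
  have hintF : ∀ e : ℝ, IntegrableOn (fun n => gaussDensity σ (n - a * e) * F n)
      (Ioo (-k) k) := fun e =>
    integrableOn_bdd _ ((hker e).mul hF) (1 / (σ * Real.sqrt (2 * Real.pi)) * |C₁|)
      fun x => by
        rw [abs_mul]
        exact mul_le_mul (hkerbd e x) ((hC₁ x).trans (le_abs_self _)) (abs_nonneg _)
          (by positivity)
  have hintG : ∀ e : ℝ, IntegrableOn (fun n => gaussDensity σ (n - a * e) * G n)
      (Ioo (-k) k) := fun e =>
    integrableOn_bdd _ ((hker e).mul hG) (1 / (σ * Real.sqrt (2 * Real.pi)) * |C₂|)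
      fun x => by
        rw [abs_mul]
        exact mul_le_mul (hkerbd e x) ((hC₂ x).trans (le_abs_self _)) (abs_nonneg _)
          (by positivity)
  -- the difference satisfies the homogeneous equation
  have hD : ∀ e ∈ Ioo (-k) k,
      F e - G e = β * ∫ n in Ioo (-k) k, gaussDensity σ (n - a * e) * (F n - G n) := by
    intro e he
    rw [hFe e he, hGe e he]
    have : (∫ n in Ioo (-k) k, gaussDensity σ (n - a * e) * (F n - G n))
        = (∫ n in Ioo (-k) k, gaussDensity σ (n - a * e) * F n)
          - ∫ n in Ioo (-k) k, gaussDensity σ (n - a * e) * G n := by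
      rw [← integral_sub (hintF e) (hintG e)]
      congr 1; ext n; ring
    rw [this]; ring
  -- iteration: |F e - G e| ≤ β^m * B on the interval
  have hiter : ∀ m : ℕ, ∀ e ∈ Ioo (-k) k, |F e - G e| ≤ β ^ m * B := by
    intro m
    induction m with
    | zero =>
      intro e _
      simpa using (abs_sub (F e) (G e)).trans (add_le_add (hC₁ e) (hC₂ e))
    | succ m ih =>
      intro e he
      rw [hD e he, abs_mul, abs_of_pos hβ.1]
      have h1 : |∫ n in Ioo (-k) k, gaussDensity σ (n - a * e) * (F n - G n)|
          ≤ β ^ m * B := by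
        calc |∫ n in Ioo (-k) k, gaussDensity σ (n - a * e) * (F n - G n)|
            ≤ ∫ n in Ioo (-k) k, |gaussDensity σ (n - a * e) * (F n - G n)| := by
              simpa only [Real.norm_eq_abs] using
                norm_integral_le_integral_norm
                  (μ := volume.restrict (Ioo (-k) k))
                  (fun n => gaussDensity σ (n - a * e) * (F n - G n))
          _ ≤ ∫ n in Ioo (-k) k, gaussDensity σ (n - a * e) * (β ^ m * B) := by
              apply setIntegral_mono_on
              · apply ((hintF e).sub (hintG e)).abs.congr
                  (ae_of_all _ fun n => ?_)
                simp only [Pi.sub_apply]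
                rw [← mul_sub]
              · exact ((gauss_integrable hσ).comp_sub_right (a * e)).integrableOn.mul_const _
              · exact measurableSet_Ioo
              · intro n hn
                rw [abs_mul, abs_of_nonneg (gauss_nonneg hσ _)]
                exact mul_le_mul_of_nonneg_left (ih n hn) (gauss_nonneg hσ _)
          _ = (∫ n in Ioo (-k) k, gaussDensity σ (n - a * e)) * (β ^ m * B) :=
              integral_mul_const _ _
          _ ≤ 1 * (β ^ m * B) := by
              exact mul_le_mul_of_nonneg_right (gauss_setIntegral_le hσ _ _)
                (mul_nonneg (pow_nonneg hβ.1.le m) hB0)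
          _ = β ^ m * B := one_mul _
      calc β * |∫ n in Ioo (-k) k, gaussDensity σ (n - a * e) * (F n - G n)|
          ≤ β * (β ^ m * B) := mul_le_mul_of_nonneg_left h1 hβ.1.le
        _ = β ^ (m + 1) * B := by ring
  -- conclude
  intro e he
  have hlim : Filter.Tendsto (fun m : ℕ => β ^ m * B) Filter.atTop (nhds 0) := by
    simpa using (tendsto_pow_atTop_nhds_zero_of_lt_one hβ.1.le hβ.2).mul_const B
  have : |F e - G e| ≤ 0 := ge_of_tendsto' hlim fun m => hiter m e he
  have := abs_nonneg (F e - G e)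
  have : F e - G e = 0 := abs_eq_zero.mp (le_antisymm ‹|F e - G e| ≤ 0› ‹0 ≤ |F e - G e|›)
  linarith [this]


/-- Gaussian scaling of the Fredholm equations for `L` and `M`:
if `L₁, M₁` solve the unit-variance equations on `(-k/σ, k/σ)`, then
`L_σ(e) = σ² L₁(e/σ)` and `M_σ(e) = M₁(e/σ)` are the unique bounded measurable solutions
of the variance-σ² equations on `(-k, k)`. -/
theorem stmt_14 (a β σ k : ℝ) (hβ : β ∈ Set.Ioo (0 : ℝ) 1) (hσ : 0 < σ) (hk : 0 < k)
    (L₁ : ℝ → ℝ) (hL₁_meas : Measurable L₁) (hL₁_bdd : ∃ C, ∀ e, |L₁ e| ≤ C)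
    (hL₁ : ∀ e ∈ Ioo (-(k / σ)) (k / σ),
      L₁ e = e ^ 2 + β * ∫ n in Ioo (-(k / σ)) (k / σ), gaussDensity 1 (n - a * e) * L₁ n)
    (M₁ : ℝ → ℝ) (hM₁_meas : Measurable M₁) (hM₁_bdd : ∃ C, ∀ e, |M₁ e| ≤ C)
    (hM₁ : ∀ e ∈ Ioo (-(k / σ)) (k / σ),
      M₁ e = 1 + β * ∫ n in Ioo (-(k / σ)) (k / σ), gaussDensity 1 (n - a * e) * M₁ n) :
    -- L_σ solves the variance-σ² equation on (-k, k)
    (∀ e ∈ Ioo (-k) k,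
      σ ^ 2 * L₁ (e / σ)
        = e ^ 2 + β * ∫ n in Ioo (-k) k, gaussDensity σ (n - a * e) * (σ ^ 2 * L₁ (n / σ))) ∧
    -- and it is the unique bounded measurable solution
    (∀ L' : ℝ → ℝ, Measurable L' → (∃ C, ∀ e, |L' e| ≤ C) →
      (∀ e ∈ Ioo (-k) k,
        L' e = e ^ 2 + β * ∫ n in Ioo (-k) k, gaussDensity σ (n - a * e) * L' n) →
      EqOn L' (fun e => σ ^ 2 * L₁ (e / σ)) (Ioo (-k) k)) ∧
    -- M_σ solves the variance-σ² equation on (-k, k)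
    (∀ e ∈ Ioo (-k) k,
      M₁ (e / σ)
        = 1 + β * ∫ n in Ioo (-k) k, gaussDensity σ (n - a * e) * M₁ (n / σ)) ∧
    -- and it is the unique bounded measurable solution
    (∀ M' : ℝ → ℝ, Measurable M' → (∃ C, ∀ e, |M' e| ≤ C) →
      (∀ e ∈ Ioo (-k) k,
        M' e = 1 + β * ∫ n in Ioo (-k) k, gaussDensity σ (n - a * e) * M' n) →
      EqOn M' (fun e => M₁ (e / σ)) (Ioo (-k) k)) := by
  obtain ⟨CL, hCL⟩ := hL₁_bdd
  obtain ⟨CM, hCM⟩ := hM₁_bdd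
  have hsL : ∀ e : ℝ, e ^ 2 = σ ^ 2 * (e / σ) ^ 2 := fun e => by
    field_simp
  have hsM : ∀ e : ℝ, (1:ℝ) = 1 * (1:ℝ) := fun e => (one_mul 1).symm
  have hexL := exists_aux (a := a) (β := β) hσ hk (σ ^ 2) (fun e => e ^ 2) hsL L₁ hL₁
  have hexM := exists_aux (a := a) (β := β) hσ hk 1 (fun _ => (1:ℝ)) (fun e => hsM e) M₁ hM₁
  have hexM' : ∀ e ∈ Ioo (-k) k,
      M₁ (e / σ) = 1 + β * ∫ n in Ioo (-k) k, gaussDensity σ (n - a * e) * M₁ (n / σ) := by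
    intro e he
    have := hexM e he
    simpa using this
  have hGLmeas : Measurable fun e => σ ^ 2 * L₁ (e / σ) :=
    measurable_const.mul (hL₁_meas.comp (measurable_id.div_const σ))
  have hGMmeas : Measurable fun e => M₁ (e / σ) :=
    hM₁_meas.comp (measurable_id.div_const σ)
  refine ⟨hexL, ?_, hexM', ?_⟩
  · intro L' hL'm hL'b hL'e
    exact unique_aux hβ hσ hk (fun e => e ^ 2) L' (fun e => σ ^ 2 * L₁ (e / σ))
      hL'm hGLmeas hL'b
      ⟨σ ^ 2 * CL, fun e => by
        rw [abs_mul, abs_of_nonneg (by positivity : (0:ℝ) ≤ σ ^ 2)]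
        exact mul_le_mul_of_nonneg_left (hCL _) (by positivity)⟩
      hL'e hexL
  · intro M' hM'm hM'b hM'e
    exact unique_aux hβ hσ hk (fun _ => (1:ℝ)) M' (fun e => M₁ (e / σ))
      hM'm hGMmeas hM'b ⟨CM, fun e => hCM _⟩ hM'e hexM'
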